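/- (Proposition 2.4, first part.) Let a, b, c ∈ ℂ with a² ≠ 4. Then there exists x ∈ ℂ with x⁴ + ax² + 1 = 0 and H_F(x,1,0) = 0 (i.e. a flex point of C_{a,b,c} lies on the line z = 0) if and only if b² + c² − abc = 0. -/

import Mathlib

/-- The Kuribayashi quartic `F(x,y,z) = x⁴+y⁴+z⁴+a x²y² + b x²z² + c y²z²`. -/
noncomputable def F (a b c x y z : ℂ) : ℂ :=
  x ^ 4 + y ^ 4 + z ^ 4 + a * x ^ 2 * y ^ 2 + b * x ^ 2 * z ^ 2 + c * y ^ 2 * z ^ 2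

/-- The Hessian determinant of the Kuribayashi quartic: the determinant of the
3×3 matrix of second partial derivatives of `F`. -/
noncomputable def HF (a b c x y z : ℂ) : ℂ :=
  Matrix.det
    !![12 * x ^ 2 + 2 * a * y ^ 2 + 2 * b * z ^ 2, 4 * a * x * y, 4 * b * x * z;
       4 * a * x * y, 12 * y ^ 2 + 2 * a * x ^ 2 + 2 * c * z ^ 2, 4 * c * y * z;
       4 * b * x * z, 4 * c * y * z, 12 * z ^ 2 + 2 * b * x ^ 2 + 2 * c * y ^ 2]

/-!
On the line `z = 0` the Hessian factors as `(2bx² + 2c)(24a(x⁴ + ax² + 1) + 36(4 − a²)x²)`.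
At a point of the curve `x ≠ 0`, so when `a² ≠ 4` the second factor is nonzero and the flex
condition becomes `bx² + c = 0`. Writing `t = x²`, a flex on `z = 0` is therefore a common root of
`t² + at + 1` and `bt + c`, and `b² + c² − abc` is the resultant of these two polynomials.
-/

open Polynomial in
theorem exists_sq_add_mul_add_one_eq_zero {K : Type*} [Field K] [IsAlgClosed K] (a : K) :
    ∃ t : K, t ^ 2 + a * t + 1 = 0 := by
  have hdeg : degree (C 1 * X ^ 2 + C a * X + C 1 : K[X]) ≠ 0 := by
    rw [degree_quadratic one_ne_zero]; decide
  obtain ⟨t, ht⟩ := IsAlgClosed.exists_root _ hdeg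
  exact ⟨t, by simpa using ht⟩

theorem exists_common_root_iff_resultant_eq_zero {K : Type*} [Field K] [IsAlgClosed K]
    (a b c : K) :
    (∃ t : K, t ^ 2 + a * t + 1 = 0 ∧ b * t + c = 0) ↔ b ^ 2 + c ^ 2 - a * b * c = 0 := by
  constructor
  · rintro ⟨t, hquad, hlin⟩
    linear_combination b ^ 2 * hquad + (c - b * t - a * b) * hlin
  · intro hres
    by_cases hb : b = 0
    · have hc : c = 0 :=
        pow_eq_zero_iff two_ne_zero |>.mp (by linear_combination hres - (b - a * c) * hb)
      obtain ⟨t, ht⟩ := exists_sq_add_mul_add_one_eq_zero a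
      exact ⟨t, ht, by simp [hb, hc]⟩
    · refine ⟨-c / b, ?_, by field_simp; ring⟩
      field_simp
      linear_combination hres

theorem exists_sq_iff_exists {K : Type*} [Field K] [IsAlgClosed K] (P : K → Prop) :
    (∃ x : K, P (x ^ 2)) ↔ ∃ t : K, P t := by
  refine ⟨fun ⟨x, hx⟩ => ⟨x ^ 2, hx⟩, fun ⟨t, ht⟩ => ?_⟩
  obtain ⟨x, rfl⟩ := IsAlgClosed.exists_pow_nat_eq t two_pos
  exact ⟨x, ht⟩

theorem HF_x_one_zero (a b c x : ℂ) :
    HF a b c x 1 0 =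
      (2 * b * x ^ 2 + 2 * c) * (24 * a * (x ^ 4 + a * x ^ 2 + 1) + 36 * (4 - a ^ 2) * x ^ 2) := by
  simp only [HF, Matrix.det_fin_three, Matrix.of_apply, Matrix.cons_val', Matrix.cons_val_zero,
    Matrix.cons_val_one, Matrix.cons_val_two, Matrix.empty_val', Matrix.cons_val_fin_one,
    Matrix.head_cons, Matrix.tail_cons, Matrix.head_fin_const]
  ring

theorem HF_x_one_zero_eq_zero_iff {a b c x : ℂ} (ha : a ^ 2 ≠ 4)
    (hx : x ^ 4 + a * x ^ 2 + 1 = 0) :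
    HF a b c x 1 0 = 0 ↔ b * x ^ 2 + c = 0 := by
  have hx0 : x ≠ 0 := by rintro rfl; norm_num at hx
  have h4 : (4 : ℂ) - a ^ 2 ≠ 0 := sub_ne_zero.mpr (Ne.symm ha)
  have hsecond : 24 * a * (x ^ 4 + a * x ^ 2 + 1) + 36 * (4 - a ^ 2) * x ^ 2 ≠ 0 := by
    rw [hx]; simp [h4, hx0]
  rw [HF_x_one_zero, mul_eq_zero, or_iff_left hsecond]
  exact ⟨fun h => by linear_combination h / 2, fun h => by linear_combination 2 * h⟩

/-- Proposition 2.4, first part: a flex point of `C_{a,b,c}` lies on the line `z = 0`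
iff `b² + c² − abc = 0`. -/
theorem flex_on_z_eq_zero_iff (a b c : ℂ) (ha : a ^ 2 ≠ 4) :
    (∃ x : ℂ, x ^ 4 + a * x ^ 2 + 1 = 0 ∧ HF a b c x 1 0 = 0) ↔
      b ^ 2 + c ^ 2 - a * b * c = 0 := by
  calc (∃ x : ℂ, x ^ 4 + a * x ^ 2 + 1 = 0 ∧ HF a b c x 1 0 = 0)
      ↔ ∃ x : ℂ, (x ^ 2) ^ 2 + a * x ^ 2 + 1 = 0 ∧ b * x ^ 2 + c = 0 := by
        refine exists_congr fun x => ?_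
        rw [← pow_mul]
        exact and_congr_right (HF_x_one_zero_eq_zero_iff ha)
    _ ↔ ∃ t : ℂ, t ^ 2 + a * t + 1 = 0 ∧ b * t + c = 0 :=
        exists_sq_iff_exists fun t => t ^ 2 + a * t + 1 = 0 ∧ b * t + c = 0
    _ ↔ b ^ 2 + c ^ 2 - a * b * c = 0 := exists_common_root_iff_resultant_eq_zero a b c
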